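/- Let A ≥ 0 and Z > 0 with extremal eigenvalues a ≥ b > 0. Then for every k, (2√(ab)/(a+b))·λ_k(AZ) ≤ μ_k(AZ) ≤ ((a+b)/(2√(ab)))·λ_k(AZ), where μ_k denotes the k-th largest singular value and λ_k the k-th largest eigenvalue of AZ. -/

import Mathlib

/-!
Put `S = Z^{1/2}` and `B = S A S ≥ 0`. Then `A Z = S⁻¹ B S` has the eigenvalues of `B`, and
`‖A Z x‖² = ⟨B y, Z⁻¹ B y⟩` for `y = S x`, while `⟨y, Z⁻¹ y⟩ = ‖x‖²`. So everything is measured in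
the norm `‖v‖_Y² = ⟨v, Z⁻¹ v⟩`, and the operator Kantorovich inequality bounds the distortion:
`‖D v‖_Y ≤ K t ‖v‖_Y` for every Hermitian `D` with spectrum in `[0, t]`, `K = (a + b) / (2√(ab))`.

On the span of the eigenvectors of `B` for `λ_k, λ_{k+1}, …`, `B` agrees with such a `D` for
`t = λ_k`; on the span of those for `λ_1, …, λ_k`, `λ_k B⁻¹` is such a `D` for `t = 1`. Pulling
these spans back by `S` and intersecting them with the spans of the matching singular vectors of
`A Z` (the Courant–Fischer dimension count) gives `μ_k ≤ K λ_k` and `λ_k ≤ K μ_k`.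
-/

open Matrix ComplexOrder

theorem exists_perm_comp_eq_of_map_univ_eq {ι α : Type*} [Fintype ι] [DecidableEq α]
    {f g : ι → α} (h : Finset.univ.val.map f = Finset.univ.val.map g) :
    ∃ σ : Equiv.Perm ι, f = g ∘ σ := by
  classical
  have hcard (c : α) : Fintype.card {i // f i = c} = Fintype.card {i // g i = c} := by
    have := congrArg (Multiset.count c) h
    simp only [Multiset.count_map, eq_comm (a := c)] at this
    rw [Fintype.card_subtype, Fintype.card_subtype]
    exact this
  exact ⟨Equiv.ofFiberEquiv fun c => Fintype.equivOfCardEq (hcard c),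
    funext fun i => (Equiv.ofFiberEquiv_map _ i).symm⟩

theorem exists_ne_zero_supported_forall_eq_zero {K ι κ : Type*} [Field K] [Fintype ι]
    (s : Finset ι) (t : Finset κ) (φ : κ → Module.Dual K (ι → K)) (h : t.card < s.card) :
    ∃ c : ι → K, c ≠ 0 ∧ (∀ p ∉ s, c p = 0) ∧ ∀ j ∈ t, φ j c = 0 := by
  classical
  let F : (ι → K) →ₗ[K] (t → K) × ((sᶜ : Finset ι) → K) :=
    (LinearMap.pi fun j : t => φ j).prod
      (LinearMap.pi fun p : (sᶜ : Finset ι) => LinearMap.proj p.1)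
  have hF : LinearMap.ker F ≠ ⊥ := F.ker_ne_bot_of_finrank_lt <| by
    simp only [Module.finrank_prod, Module.finrank_fintype_fun_eq_card, Fintype.card_coe,
      Finset.card_compl]
    have := s.card_le_univ
    omega
  obtain ⟨c, hc, hc0⟩ := (Submodule.ne_bot_iff _).mp hF
  refine ⟨c, hc0, fun p hp => ?_, fun j hj => ?_⟩
  · simpa [F] using congrFun (congrArg Prod.snd hc) ⟨p, Finset.mem_compl.mpr hp⟩
  · simpa [F] using congrFun (congrArg Prod.fst hc) ⟨j, hj⟩

namespace Matrix

section QuadraticForm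

variable {ι : Type*} [Fintype ι]

theorem star_mulVec_dotProduct_mulVec (M Y : Matrix ι ι ℂ) (v : ι → ℂ) :
    star (M *ᵥ v) ⬝ᵥ (Y *ᵥ (M *ᵥ v)) = star v ⬝ᵥ ((Mᴴ * Y * M) *ᵥ v) := by
  rw [star_mulVec, ← dotProduct_mulVec, mulVec_mulVec, mulVec_mulVec, mul_assoc]

theorem PosSemidef.dotProduct_mulVec_le {M Y : Matrix ι ι ℂ} {r : ℝ}
    (h : (r • Y - M).PosSemidef) (v : ι → ℂ) : star v ⬝ᵥ (M *ᵥ v) ≤ r * (star v ⬝ᵥ (Y *ᵥ v)) := by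
  have := h.dotProduct_mulVec_nonneg v
  rwa [sub_mulVec, dotProduct_sub, smul_mulVec, dotProduct_smul, Complex.real_smul,
    sub_nonneg] at this

theorem le_of_mul_dotProduct_le {x : ι → ℂ} (hx : x ≠ 0) {r s : ℝ}
    (h : (r : ℂ) * (star x ⬝ᵥ x) ≤ s * (star x ⬝ᵥ x)) : r ≤ s :=
  Complex.real_le_real.mp (le_of_mul_le_mul_right h (dotProduct_star_self_pos_iff.mpr hx))

end QuadraticForm

section UnitaryDiag

variable {ι : Type*} [Fintype ι] [DecidableEq ι]

noncomputable def unitaryDiag (U : unitaryGroup ι ℂ) (f : ι → ℝ) : Matrix ι ι ℂ :=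
  Unitary.conjStarAlgAut ℂ _ U (diagonal (RCLike.ofReal ∘ f))

theorem IsHermitian.eq_unitaryDiag {A : Matrix ι ι ℂ} (hA : A.IsHermitian) :
    A = unitaryDiag hA.eigenvectorUnitary hA.eigenvalues :=
  hA.spectral_theorem

variable (U : unitaryGroup ι ℂ)

theorem unitaryDiag_mul (f g : ι → ℝ) :
    unitaryDiag U f * unitaryDiag U g = unitaryDiag U (f * g) := by
  rw [unitaryDiag, unitaryDiag, unitaryDiag, ← map_mul, diagonal_mul_diagonal]
  congr 2 with i
  simp

theorem unitaryDiag_sub (f g : ι → ℝ) :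
    unitaryDiag U f - unitaryDiag U g = unitaryDiag U (f - g) := by
  rw [unitaryDiag, unitaryDiag, unitaryDiag, ← map_sub, diagonal_sub]
  congr 2 with i
  simp

theorem smul_unitaryDiag (r : ℝ) (f : ι → ℝ) :
    r • unitaryDiag U f = unitaryDiag U (r • f) := by
  rw [unitaryDiag, unitaryDiag, ← algebraMap_smul ℂ, ← map_smul, ← diagonal_smul]
  congr 2 with i
  simp

theorem unitaryDiag_one : unitaryDiag U 1 = 1 := by
  rw [unitaryDiag, ← map_one (Unitary.conjStarAlgAut ℂ _ U), ← diagonal_one]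
  congr 2 with i

theorem unitaryDiag_mul_inv {f : ι → ℝ} (hf : ∀ i, f i ≠ 0) :
    unitaryDiag U f * unitaryDiag U f⁻¹ = 1 := by
  rw [unitaryDiag_mul, ← unitaryDiag_one U]
  congr 1 with i
  simp [hf i]

theorem unitaryDiag_inv_mul {f : ι → ℝ} (hf : ∀ i, f i ≠ 0) :
    unitaryDiag U f⁻¹ * unitaryDiag U f = 1 := by
  rw [unitaryDiag_mul, ← unitaryDiag_one U]
  congr 1 with i
  simp [hf i]

theorem isHermitian_unitaryDiag (f : ι → ℝ) : (unitaryDiag U f).IsHermitian := by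
  rw [IsHermitian, ← star_eq_conjTranspose, unitaryDiag, ← map_star, star_eq_conjTranspose,
    diagonal_conjTranspose]
  congr 2 with i
  simp

theorem posSemidef_unitaryDiag {f : ι → ℝ} (hf : 0 ≤ f) : (unitaryDiag U f).PosSemidef := by
  have : (diagonal (RCLike.ofReal ∘ f) : Matrix ι ι ℂ).PosSemidef :=
    posSemidef_diagonal_iff.mpr fun i => by simpa using hf i
  simpa [unitaryDiag, star_eq_conjTranspose] using
    this.mul_mul_conjTranspose_same (U : Matrix ι ι ℂ)

theorem star_unitary_mulVec_unitary_mulVec (c : ι → ℂ) :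
    (star U : Matrix ι ι ℂ) *ᵥ ((U : Matrix ι ι ℂ) *ᵥ c) = c := by
  rw [mulVec_mulVec, Unitary.coe_star_mul_self, one_mulVec]

theorem exists_ne_zero_supported_star_mulVec {κ : Type*} (s : Finset ι) (t : Finset κ)
    (φ : κ → Module.Dual ℂ (ι → ℂ)) (h : t.card < s.card) :
    ∃ x ≠ 0, (∀ j ∈ t, φ j x = 0) ∧ ∀ p, ((star U : Matrix ι ι ℂ) *ᵥ x) p ≠ 0 → p ∈ s := by
  obtain ⟨c, hc0, hcs, hct⟩ :=
    exists_ne_zero_supported_forall_eq_zero s t (fun j => φ j ∘ₗ (U : Matrix ι ι ℂ).mulVecLin) h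
  refine ⟨(U : Matrix ι ι ℂ) *ᵥ c, fun hx => hc0 ?_, hct, fun p hp => ?_⟩
  · simpa [star_unitary_mulVec_unitary_mulVec] using congrArg (star (U : Matrix ι ι ℂ) *ᵥ ·) hx
  · rw [star_unitary_mulVec_unitary_mulVec] at hp
    exact not_not.mp (mt (hcs p) hp)

theorem unitaryDiag_mulVec_congr {f g : ι → ℝ} {x : ι → ℂ}
    (h : ∀ p, ((star U : Matrix ι ι ℂ) *ᵥ x) p ≠ 0 → f p = g p) :
    unitaryDiag U f *ᵥ x = unitaryDiag U g *ᵥ x := by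
  simp only [unitaryDiag, Unitary.conjStarAlgAut_apply, ← mulVec_mulVec]
  congr 1
  ext p
  simp only [mulVec_diagonal, Function.comp_apply]
  by_cases hp : ((star U : Matrix ι ι ℂ) *ᵥ x) p = 0
  · simp [hp]
  · rw [h p hp]

theorem dotProduct_unitaryDiag_mulVec_nonneg {f : ι → ℝ} {x : ι → ℂ}
    (h : ∀ p, ((star U : Matrix ι ι ℂ) *ᵥ x) p ≠ 0 → 0 ≤ f p) :
    0 ≤ star x ⬝ᵥ (unitaryDiag U f *ᵥ x) := by
  rw [unitaryDiag_mulVec_congr U (g := fun p => max (f p) 0) fun p hp =>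
    (max_eq_left (h p hp)).symm]
  exact (posSemidef_unitaryDiag U fun p => le_max_right _ _).dotProduct_mulVec_nonneg x

theorem posSemidef_smul_one_sub_unitaryDiag_sub_smul_inv {z : ι → ℝ} {a b : ℝ} (hb : 0 < b)
    (hz : ∀ i, b ≤ z i ∧ z i ≤ a) :
    ((a + b) • 1 - unitaryDiag U z - (a * b) • unitaryDiag U z⁻¹).PosSemidef := by
  rw [← unitaryDiag_one U, smul_unitaryDiag, smul_unitaryDiag, unitaryDiag_sub, unitaryDiag_sub]
  refine posSemidef_unitaryDiag U fun i => ?_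
  obtain ⟨hbz, hza⟩ := hz i
  have hz0 : 0 < z i := hb.trans_le hbz
  have key : (a + b) * 1 - z i - a * b * (z i)⁻¹ = (a - z i) * (z i - b) / z i := by
    field_simp
    ring
  simp only [Pi.zero_apply, Pi.sub_apply, Pi.smul_apply, Pi.one_apply, Pi.inv_apply, smul_eq_mul]
  exact key ▸ div_nonneg (mul_nonneg (sub_nonneg.mpr hza) (sub_nonneg.mpr hbz)) hz0.le

theorem posSemidef_kantorovich {z : ι → ℝ} {a b : ℝ} (hb : 0 < b) (hba : b ≤ a)
    (hz : ∀ i, b ≤ z i ∧ z i ≤ a) {D : Matrix ι ι ℂ} (hD : D.IsHermitian) {t : ℝ}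
    (hDt : (t • D - D * D).PosSemidef) :
    (((a + b) / (2 * √(a * b)) * t) ^ 2 • unitaryDiag U z⁻¹ -
      D * unitaryDiag U z⁻¹ * D).PosSemidef := by
  have hz0 (i : ι) : 0 < z i := hb.trans_le (hz i).1
  have ha : 0 < a := hb.trans_le hba
  have hab : 0 < a * b := mul_pos ha hb
  have hsqrt (i : ι) : √(z i) ≠ 0 := (Real.sqrt_pos.mpr (hz0 i)).ne'
  set Y := unitaryDiag U z⁻¹
  set Z := unitaryDiag U z
  set W := unitaryDiag U (fun i => √(z i))⁻¹
  set V := unitaryDiag U fun i => √(z i)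
  have hWW : W * W = Y := by
    rw [unitaryDiag_mul]
    congr 1 with i
    simp [← mul_inv, Real.mul_self_sqrt (hz0 i).le]
  have hWV : W * (V * D) = D := by rw [← mul_assoc, unitaryDiag_inv_mul U hsqrt, one_mul]
  have hVW : D * (V * W) = D := by rw [unitaryDiag_mul_inv U hsqrt, mul_one]
  have hVV : V * (V * D) = Z * D := by
    rw [← mul_assoc, unitaryDiag_mul]
    congr 2 with i
    simp [Real.mul_self_sqrt (hz0 i).le]
  set R := ((a + b) / 2 * t) • W - V * D
  have hR : Rᴴ = ((a + b) / 2 * t) • W - D * V := by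
    simp [R, (isHermitian_unitaryDiag U _).eq, hD.eq, W, V]
  have hK : a * b * ((a + b) / (2 * √(a * b)) * t) ^ 2 = ((a + b) / 2 * t) ^ 2 := by
    rw [mul_pow, div_pow, mul_pow, Real.sq_sqrt hab.le]
    field_simp
  have key : (a * b) • (((a + b) / (2 * √(a * b)) * t) ^ 2 • Y - D * Y * D) =
      Rᴴ * R + D * ((a + b) • 1 - Z - (a * b) • Y) * D + (a + b) • (t • D - D * D) := by
    rw [hR, smul_sub, smul_smul, hK]
    simp only [R, sub_mul, mul_sub, smul_mul_assoc, mul_smul_comm, smul_sub, smul_smul, mul_one,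
      mul_assoc, hWW, hWV, hVW, hVV]
    module
  have hΦ : (D * ((a + b) • 1 - Z - (a * b) • Y) * D).PosSemidef := by
    simpa [hD.eq] using
      (posSemidef_smul_one_sub_unitaryDiag_sub_smul_inv U hb hz).conjTranspose_mul_mul_same D
  rw [← inv_smul_smul₀ hab.ne' (_ - _), key]
  exact ((((posSemidef_conjTranspose_mul_self R).add hΦ).add (hDt.smul (by positivity))).smul
    (inv_nonneg.mpr hab.le))

theorem PosDef.exists_sqrt_factorization {Z : Matrix ι ι ℂ} (hZ : Z.PosDef) (A : Matrix ι ι ℂ) :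
    ∃ S : Matrix ι ι ℂ, S.IsHermitian ∧
      Sᴴ * unitaryDiag hZ.1.eigenvectorUnitary hZ.1.eigenvalues⁻¹ * S = 1 ∧
      (A * Z).charpoly = (S * A * S).charpoly ∧
      (A * Z)ᴴ * (A * Z) = (S * A * S * S)ᴴ *
        unitaryDiag hZ.1.eigenvectorUnitary hZ.1.eigenvalues⁻¹ * (S * A * S * S) := by
  set U := hZ.1.eigenvectorUnitary
  set e := hZ.1.eigenvalues
  have hsqrt (i : ι) : √(e i) ≠ 0 := (Real.sqrt_pos.mpr (hZ.eigenvalues_pos i)).ne'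
  set S := unitaryDiag U fun i => √(e i)
  set T := unitaryDiag U (fun i => √(e i))⁻¹
  have hS : S.IsHermitian := isHermitian_unitaryDiag U _
  have hAZ : A * Z = T * (S * A * S) * S := by
    have hSS : S * S = Z := by
      conv_rhs => rw [hZ.1.eq_unitaryDiag]
      rw [unitaryDiag_mul]
      congr 1 with i
      exact Real.mul_self_sqrt (hZ.eigenvalues_pos i).le
    calc A * Z = (T * S) * A * (S * S) := by rw [unitaryDiag_inv_mul U hsqrt, one_mul, hSS]
      _ = T * (S * A * S) * S := by simp only [mul_assoc]
  have hTT : Tᴴ * T = unitaryDiag U e⁻¹ := by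
    rw [(isHermitian_unitaryDiag U _).eq, unitaryDiag_mul]
    congr 1 with i
    simp only [Pi.mul_apply, Pi.inv_apply]
    rw [← mul_inv, Real.mul_self_sqrt (hZ.eigenvalues_pos i).le]
  refine ⟨S, hS, ?_, ?_, ?_⟩
  · rw [← hTT, hS.eq, (isHermitian_unitaryDiag U _).eq, ← mul_assoc, unitaryDiag_mul_inv U hsqrt,
      one_mul, unitaryDiag_inv_mul U hsqrt]
  · rw [hAZ, charpoly_mul_comm, ← mul_assoc, ← mul_assoc, unitaryDiag_mul_inv U hsqrt, one_mul]
  · rw [hAZ, ← hTT]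
    simp only [conjTranspose_mul, mul_assoc]

end UnitaryDiag

section SortedEigenvalues

variable {n : ℕ} {H B N S Y : Matrix (Fin n) (Fin n) ℂ} {ν lam : Fin n → ℝ} {K : ℝ}

theorem IsHermitian.exists_perm_eigenvalues_comp_eq (hH : H.IsHermitian)
    (hν : Finset.univ.val.map (fun i => (ν i : ℂ)) = H.charpoly.roots) :
    ∃ σ : Equiv.Perm (Fin n), ν = hH.eigenvalues ∘ σ := by
  refine exists_perm_comp_eq_of_map_univ_eq (Multiset.map_injective Complex.ofReal_injective ?_)
  rw [Multiset.map_map, Multiset.map_map, Function.comp_def, hν,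
    hH.roots_charpoly_eq_eigenvalues]
  rfl

theorem PosSemidef.nonneg_of_roots_charpoly (hB : B.PosSemidef)
    (hν : Finset.univ.val.map (fun i => (ν i : ℂ)) = B.charpoly.roots) (i : Fin n) : 0 ≤ ν i := by
  obtain ⟨σ, rfl⟩ := hB.1.exists_perm_eigenvalues_comp_eq hν
  exact hB.eigenvalues_nonneg _

theorem IsHermitian.exists_ne_zero_mul_dotProduct_le (hH : H.IsHermitian) (hνmono : Antitone ν)
    (hν : Finset.univ.val.map (fun i => (ν i : ℂ)) = H.charpoly.roots) {κ : Type*} (k : Fin n)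
    (t : Finset κ) (φ : κ → Module.Dual ℂ (Fin n → ℂ)) (ht : t.card ≤ k) :
    ∃ x ≠ 0, (∀ j ∈ t, φ j x = 0) ∧ (ν k : ℂ) * (star x ⬝ᵥ x) ≤ star x ⬝ᵥ (H *ᵥ x) := by
  obtain ⟨σ, rfl⟩ := hH.exists_perm_eigenvalues_comp_eq hν
  obtain ⟨x, hx0, hxt, hxs⟩ := exists_ne_zero_supported_star_mulVec hH.eigenvectorUnitary
    ((Finset.Iic k).map σ.toEmbedding) t φ (by simpa using Nat.lt_succ_of_le ht)
  refine ⟨x, hx0, hxt, sub_nonneg.mp ?_⟩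
  have key := dotProduct_unitaryDiag_mulVec_nonneg hH.eigenvectorUnitary
    (f := hH.eigenvalues - hH.eigenvalues (σ k) • 1) (x := x) fun p hp => by
      obtain ⟨i, hi, rfl⟩ := Finset.mem_map.mp (hxs p hp)
      simpa using hνmono (Finset.mem_Iic.mp hi)
  rw [← unitaryDiag_sub, ← smul_unitaryDiag, unitaryDiag_one, ← hH.eq_unitaryDiag, sub_mulVec,
    dotProduct_sub, smul_mulVec, one_mulVec, dotProduct_smul, Complex.real_smul] at key
  exact key

theorem IsHermitian.exists_ne_zero_dotProduct_le_mul (hH : H.IsHermitian) (hνmono : Antitone ν)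
    (hν : Finset.univ.val.map (fun i => (ν i : ℂ)) = H.charpoly.roots) {κ : Type*} (k : Fin n)
    (t : Finset κ) (φ : κ → Module.Dual ℂ (Fin n → ℂ)) (ht : t.card < n - k) :
    ∃ x ≠ 0, (∀ j ∈ t, φ j x = 0) ∧ star x ⬝ᵥ (H *ᵥ x) ≤ (ν k : ℂ) * (star x ⬝ᵥ x) := by
  obtain ⟨σ, rfl⟩ := hH.exists_perm_eigenvalues_comp_eq hν
  obtain ⟨x, hx0, hxt, hxs⟩ := exists_ne_zero_supported_star_mulVec hH.eigenvectorUnitary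
    ((Finset.Ici k).map σ.toEmbedding) t φ (by simpa using ht)
  refine ⟨x, hx0, hxt, sub_nonneg.mp ?_⟩
  have key := dotProduct_unitaryDiag_mulVec_nonneg hH.eigenvectorUnitary
    (f := hH.eigenvalues (σ k) • 1 - hH.eigenvalues) (x := x) fun p hp => by
      obtain ⟨i, hi, rfl⟩ := Finset.mem_map.mp (hxs p hp)
      simpa using hνmono (Finset.mem_Ici.mp hi)
  rw [← unitaryDiag_sub, ← smul_unitaryDiag, unitaryDiag_one, ← hH.eq_unitaryDiag, sub_mulVec,
    dotProduct_sub, smul_mulVec, one_mulVec, dotProduct_smul, Complex.real_smul] at key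
  exact key

theorem PosSemidef.exists_mulVec_eq_of_forall_lt (hB : B.PosSemidef) (hlmono : Antitone lam)
    (hlam : Finset.univ.val.map (fun i => (lam i : ℂ)) = B.charpoly.roots) (k : Fin n) :
    ∃ (φ : Fin n → Module.Dual ℂ (Fin n → ℂ)) (D : Matrix (Fin n) (Fin n) ℂ),
      D.IsHermitian ∧ (lam k • D - D * D).PosSemidef ∧
      ∀ y, (∀ j ∈ Finset.Iio k, φ j y = 0) → B *ᵥ y = D *ᵥ y := by
  obtain ⟨σ, rfl⟩ := hB.1.exists_perm_eigenvalues_comp_eq hlam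
  set V := hB.1.eigenvectorUnitary
  set e := hB.1.eigenvalues
  refine ⟨fun j => LinearMap.proj (σ j) ∘ₗ (star V : Matrix (Fin n) (Fin n) ℂ).mulVecLin,
    unitaryDiag V fun p => if k ≤ σ.symm p then e p else 0, isHermitian_unitaryDiag _ _, ?_,
    fun y hy => ?_⟩
  · rw [smul_unitaryDiag, unitaryDiag_mul, unitaryDiag_sub]
    refine posSemidef_unitaryDiag _ fun p => ?_
    simp only [Pi.sub_apply, Pi.smul_apply, Pi.mul_apply, Pi.zero_apply, Function.comp_apply,
      smul_eq_mul]
    split_ifs with hp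
    · have hle : e p ≤ e (σ k) := by simpa using hlmono hp
      nlinarith [hB.eigenvalues_nonneg p]
    · simp
  · conv_lhs => rw [hB.1.eq_unitaryDiag]
    refine unitaryDiag_mulVec_congr _ fun p hp => (if_pos ?_).symm
    by_contra hpk
    simpa using hp <| by simpa using hy (σ.symm p) (Finset.mem_Iio.mpr (not_le.mp hpk))

theorem PosSemidef.exists_mulVec_mulVec_eq_of_forall_gt (hB : B.PosSemidef)
    (hlmono : Antitone lam)
    (hlam : Finset.univ.val.map (fun i => (lam i : ℂ)) = B.charpoly.roots) (k : Fin n) :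
    ∃ (φ : Fin n → Module.Dual ℂ (Fin n → ℂ)) (D : Matrix (Fin n) (Fin n) ℂ),
      D.IsHermitian ∧ (D - D * D).PosSemidef ∧
      ∀ y, (∀ j ∈ Finset.Ioi k, φ j y = 0) → D *ᵥ (B *ᵥ y) = lam k • y := by
  obtain ⟨σ, rfl⟩ := hB.1.exists_perm_eigenvalues_comp_eq hlam
  set V := hB.1.eigenvectorUnitary
  set e := hB.1.eigenvalues
  have he : ∀ p, σ.symm p ≤ k → 0 ≤ e (σ k) ∧ e (σ k) ≤ e p := fun p hp =>
    ⟨hB.eigenvalues_nonneg _, by simpa using hlmono hp⟩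
  refine ⟨fun j => LinearMap.proj (σ j) ∘ₗ (star V : Matrix (Fin n) (Fin n) ℂ).mulVecLin,
    unitaryDiag V fun p => if σ.symm p ≤ k then e (σ k) / e p else 0,
    isHermitian_unitaryDiag _ _, ?_, fun y hy => ?_⟩
  · rw [unitaryDiag_mul, unitaryDiag_sub]
    refine posSemidef_unitaryDiag _ fun p => ?_
    simp only [Pi.sub_apply, Pi.mul_apply, Pi.zero_apply]
    split_ifs with hp
    · obtain ⟨h0, hle⟩ := he p hp
      have h1 : e (σ k) / e p ≤ 1 := div_le_one_of_le₀ hle (h0.trans hle)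
      nlinarith [div_nonneg h0 (h0.trans hle)]
    · simp
  · rw [mulVec_mulVec]
    conv_lhs => rw [hB.1.eq_unitaryDiag]
    rw [unitaryDiag_mul, unitaryDiag_mulVec_congr V (g := e (σ k) • 1), ← smul_unitaryDiag,
      unitaryDiag_one, smul_mulVec, one_mulVec]
    · rfl
    intro p hp
    have hpk : σ.symm p ≤ k := by
      by_contra hpk
      simpa using hp <| by simpa using hy (σ.symm p) (Finset.mem_Ioi.mpr (not_le.mp hpk))
    obtain ⟨h0, hle⟩ := he p hpk
    simp only [Pi.mul_apply, Pi.smul_apply, Pi.one_apply, smul_eq_mul, mul_one, if_pos hpk]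
    -- if `e p = 0` then also `e (σ k) = 0`, so the junk value `e (σ k) / 0 = 0` does no harm
    rcases (h0.trans hle).eq_or_lt with hp0 | hp0
    · rw [← hp0] at hle ⊢
      simp [le_antisymm hle h0]
    · exact div_mul_cancel₀ _ hp0.ne'

theorem eigenvalue_conjTranspose_mul_self_le (hNN : Nᴴ * N = (B * S)ᴴ * Y * (B * S))
    (hSYS : Sᴴ * Y * S = 1)
    (hY : ∀ (D : Matrix (Fin n) (Fin n) ℂ) (t : ℝ), D.IsHermitian →
      (t • D - D * D).PosSemidef → ((K * t) ^ 2 • Y - D * Y * D).PosSemidef)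
    (hB : B.PosSemidef) (hlmono : Antitone lam)
    (hlam : Finset.univ.val.map (fun i => (lam i : ℂ)) = B.charpoly.roots) (hνmono : Antitone ν)
    (hν : Finset.univ.val.map (fun i => (ν i : ℂ)) = (Nᴴ * N).charpoly.roots) (k : Fin n) :
    ν k ≤ (K * lam k) ^ 2 := by
  have hSY (x : Fin n → ℂ) : star (S *ᵥ x) ⬝ᵥ (Y *ᵥ (S *ᵥ x)) = star x ⬝ᵥ x := by
    rw [star_mulVec_dotProduct_mulVec, hSYS, one_mulVec]
  obtain ⟨φ, D, hD, hDt, hBD⟩ := hB.exists_mulVec_eq_of_forall_lt hlmono hlam k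
  obtain ⟨x, hx0, hxφ, hxN⟩ :=
    (isHermitian_conjTranspose_mul_self N).exists_ne_zero_mul_dotProduct_le hνmono hν k
      (Finset.Iio k) (fun j => φ j ∘ₗ S.mulVecLin) (Fin.card_Iio k).le
  refine le_of_mul_dotProduct_le hx0 ?_
  calc (ν k : ℂ) * (star x ⬝ᵥ x) ≤ star x ⬝ᵥ ((Nᴴ * N) *ᵥ x) := hxN
    _ = star (D *ᵥ (S *ᵥ x)) ⬝ᵥ (Y *ᵥ (D *ᵥ (S *ᵥ x))) := by
      rw [hNN, ← star_mulVec_dotProduct_mulVec, ← mulVec_mulVec, hBD (S *ᵥ x) hxφ]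
    _ = star (S *ᵥ x) ⬝ᵥ ((D * Y * D) *ᵥ (S *ᵥ x)) := by
      rw [star_mulVec_dotProduct_mulVec, hD.eq]
    _ ≤ ((K * lam k) ^ 2 : ℝ) * (star (S *ᵥ x) ⬝ᵥ (Y *ᵥ (S *ᵥ x))) :=
      (hY D (lam k) hD hDt).dotProduct_mulVec_le _
    _ = ((K * lam k) ^ 2 : ℝ) * (star x ⬝ᵥ x) := by rw [hSY]

theorem sq_le_eigenvalue_conjTranspose_mul_self (hNN : Nᴴ * N = (B * S)ᴴ * Y * (B * S))
    (hSYS : Sᴴ * Y * S = 1)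
    (hY : ∀ (D : Matrix (Fin n) (Fin n) ℂ) (t : ℝ), D.IsHermitian →
      (t • D - D * D).PosSemidef → ((K * t) ^ 2 • Y - D * Y * D).PosSemidef)
    (hB : B.PosSemidef) (hlmono : Antitone lam)
    (hlam : Finset.univ.val.map (fun i => (lam i : ℂ)) = B.charpoly.roots) (hνmono : Antitone ν)
    (hν : Finset.univ.val.map (fun i => (ν i : ℂ)) = (Nᴴ * N).charpoly.roots) (k : Fin n) :
    lam k ^ 2 ≤ K ^ 2 * ν k := by
  have hSY (x : Fin n → ℂ) : star (S *ᵥ x) ⬝ᵥ (Y *ᵥ (S *ᵥ x)) = star x ⬝ᵥ x := by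
    rw [star_mulVec_dotProduct_mulVec, hSYS, one_mulVec]
  obtain ⟨φ, D, hD, hD1, hDB⟩ := hB.exists_mulVec_mulVec_eq_of_forall_gt hlmono hlam k
  obtain ⟨x, hx0, hxφ, hxN⟩ :=
    (isHermitian_conjTranspose_mul_self N).exists_ne_zero_dotProduct_le_mul hνmono hν k
      (Finset.Ioi k) (fun j => φ j ∘ₗ S.mulVecLin) (by rw [Fin.card_Ioi]; omega)
  refine le_of_mul_dotProduct_le hx0 ?_
  calc ((lam k ^ 2 : ℝ) : ℂ) * (star x ⬝ᵥ x)
        = star (lam k • (S *ᵥ x)) ⬝ᵥ (Y *ᵥ (lam k • (S *ᵥ x))) := by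
        simp only [mulVec_smul, star_smul, star_trivial, smul_dotProduct, dotProduct_smul,
          Complex.real_smul, hSY]
        push_cast
        ring
    _ = star (B *ᵥ (S *ᵥ x)) ⬝ᵥ ((D * Y * D) *ᵥ (B *ᵥ (S *ᵥ x))) := by
      rw [← hDB (S *ᵥ x) hxφ, star_mulVec_dotProduct_mulVec, hD.eq]
    _ ≤ ((K * 1) ^ 2 : ℝ) * (star (B *ᵥ (S *ᵥ x)) ⬝ᵥ (Y *ᵥ (B *ᵥ (S *ᵥ x)))) :=
      (hY D 1 hD (by rwa [one_smul])).dotProduct_mulVec_le _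
    _ = (K ^ 2 : ℝ) * (star x ⬝ᵥ ((Nᴴ * N) *ᵥ x)) := by
      rw [hNN, ← star_mulVec_dotProduct_mulVec, ← mulVec_mulVec, mul_one]
    _ ≤ (K ^ 2 : ℝ) * ((ν k : ℂ) * (star x ⬝ᵥ x)) :=
      mul_le_mul_of_nonneg_left hxN (Complex.zero_le_real.mpr (sq_nonneg K))
    _ = ((K ^ 2 * ν k : ℝ) : ℂ) * (star x ⬝ᵥ x) := by
      push_cast
      ring

end SortedEigenvalues

end Matrix

theorem singularValue_eigenvalue_kantorovich {n : ℕ} (A Z : Matrix (Fin n) (Fin n) ℂ)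
    (hA : A.PosSemidef) (hZ : Z.PosDef) (a b : ℝ)
    (ha : IsGreatest (Set.range hZ.1.eigenvalues) a)
    (hb : IsLeast (Set.range hZ.1.eigenvalues) b)
    (μ lam : Fin n → ℝ) (hμmono : Antitone μ) (hlmono : Antitone lam)
    (hμnn : ∀ i, 0 ≤ μ i)
    -- the `μ i` are the singular values of `A * Z`: their squares are the
    -- eigenvalues (roots of the characteristic polynomial) of `(A*Z)ᴴ * (A*Z)`
    (hμ : Multiset.map (fun i => ((μ i : ℂ) ^ 2)) Finset.univ.val =
      ((A * Z)ᴴ * (A * Z)).charpoly.roots)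
    -- the `lam i` are the eigenvalues of `A * Z`
    (hlam : Multiset.map (fun i => ((lam i : ℂ))) Finset.univ.val =
      (A * Z).charpoly.roots) :
    ∀ k, 2 * Real.sqrt (a * b) / (a + b) * lam k ≤ μ k ∧
      μ k ≤ (a + b) / (2 * Real.sqrt (a * b)) * lam k := by
  intro k
  obtain ⟨S, hS, hSYS, hchar, hNN⟩ := hZ.exists_sqrt_factorization A
  have he (i : Fin n) : b ≤ hZ.1.eigenvalues i ∧ hZ.1.eigenvalues i ≤ a :=
    ⟨hb.2 ⟨i, rfl⟩, ha.2 ⟨i, rfl⟩⟩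
  have hb0 : 0 < b := by
    obtain ⟨i, rfl⟩ := hb.1
    exact hZ.eigenvalues_pos i
  have hba : b ≤ a := hb.2 ha.1
  have hY := fun D t => posSemidef_kantorovich hZ.1.eigenvectorUnitary (D := D) (t := t) hb0 hba he
  have hB : (S * A * S).PosSemidef := by simpa [hS.eq] using hA.conjTranspose_mul_mul_same S
  rw [hchar] at hlam
  have hνmono : Antitone fun i => μ i ^ 2 := fun i j hij => pow_le_pow_left₀ (hμnn j) (hμmono hij) 2
  simp only [← Complex.ofReal_pow] at hμ
  have hup := eigenvalue_conjTranspose_mul_self_le hNN hSYS hY hB hlmono hlam hνmono hμ k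
  have hlow := sq_le_eigenvalue_conjTranspose_mul_self hNN hSYS hY hB hlmono hlam hνmono hμ k
  set K := (a + b) / (2 * √(a * b)) with hKdef
  have hK : 0 < K := div_pos (by linarith) (mul_pos two_pos (Real.sqrt_pos.mpr (by nlinarith)))
  refine ⟨?_, (abs_le_of_sq_le_sq' hup (mul_nonneg hK.le (hB.nonneg_of_roots_charpoly hlam k))).2⟩
  have hlow' : lam k ≤ K * μ k :=
    (abs_le_of_sq_le_sq' (by rwa [mul_pow]) (mul_nonneg hK.le (hμnn k))).2
  calc 2 * √(a * b) / (a + b) * lam k = K⁻¹ * lam k := by rw [hKdef, inv_div]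
    _ ≤ μ k := (inv_mul_le_iff₀ hK).mpr hlow'
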